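/- Suppose a gradient element g over a batch of size n satisfies the criterion (α/n)·V < g² with α ≥ 1, where V is the sample variance of per-sample gradients and g the sample mean. If additionally g is a good estimate in the sense that (g − ∇_i f(x))² ≤ (1/n)·V, then (∇_i f(x))·g > 0 provided α ≥ 4, i.e., the sent gradient element has the same sign as the true gradient element. -/

import Mathlib

-- `(g - t)² < g²` unfolds to `t² < 2 t g`.
theorem mul_pos_of_sq_sub_lt_sq {R : Type*} [CommRing R] [LinearOrder R] [IsStrictOrderedRing R]
    {g t : R} (h : (g - t) ^ 2 < g ^ 2) : 0 < t * g := by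
  nlinarith [sq_nonneg t]

theorem same_sign_of_criterion_general (n : ℕ) (α g V t : ℝ)
    (hα : 4 ≤ α)
    (hcrit : (α / n) * V < g ^ 2)
    (hest : (g - t) ^ 2 ≤ V / n) :
    t * g > 0 := by
  have hVn : 0 ≤ V / n := (sq_nonneg _).trans hest
  refine mul_pos_of_sq_sub_lt_sq ?_
  calc (g - t) ^ 2 ≤ V / n := hest
    _ ≤ α * (V / n) := le_mul_of_one_le_left hVn (by linarith)
    _ = (α / n) * V := by ring
    _ < g ^ 2 := hcrit

/-- Under the variance criterion with `α ≥ 4` and a good estimate assumption,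
the sent gradient element has the same (nonzero) sign as the true one. -/
theorem same_sign_of_criterion (n : ℕ) (hn : 1 ≤ n) (α g V t : ℝ)
    (hα : 4 ≤ α) (hV : 0 ≤ V)
    (hcrit : (α / n) * V < g ^ 2)
    (hest : (g - t) ^ 2 ≤ V / n) :
    t * g > 0 :=
  same_sign_of_criterion_general n α g V t hα hcrit hest
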